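/- For every α with −π < α < π, the set E_α = [−2π + 2α, −π + α) ∪ [π + α, 2π + 2α) is a wavelet set, i.e., it is a 2-dilation generator of a partition of ℝ∖{0} and is 2π-translation congruent to [0,2π). -/
import Mathlib


open MeasureTheory Set Real

/-- Translation congruence modulo `2π`. -/
def TranslationCongruent (E F : Set ℝ) : Prop :=
  ∃ φ : ℝ → ℝ, Measurable φ ∧ Set.BijOn φ E F ∧ ∀ s ∈ E, ∃ k : ℤ, φ s = s + 2 * π * k

/-- The generalized Shannon set `E_α = [−2π+2α, −π+α) ∪ [π+α, 2π+2α)`. -/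
def Eset (α : ℝ) : Set ℝ :=
  Set.Ico (-(2 * π) + 2 * α) (-π + α) ∪ Set.Ico (π + α) (2 * π + 2 * α)

/-- The mod-`2π` reduction map. -/
noncomputable def phi (s : ℝ) : ℝ := s - 2 * π * ⌊s / (2 * π)⌋

lemma phi_val (y : ℝ) (k : ℤ) (hy0 : 0 ≤ y) (hy1 : y < 2 * π) :
    phi (y + 2 * π * k) = y := by
  have h2π : (0:ℝ) < 2 * π := by positivity
  have hd : (y + 2 * π * k) / (2 * π) = y / (2 * π) + k := by field_simp
  have hfl : ⌊y / (2 * π)⌋ = 0 := by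
    rw [Int.floor_eq_zero_iff]
    constructor
    · positivity
    · rw [div_lt_one h2π]; linarith
  unfold phi
  rw [hd, Int.floor_add_intCast, hfl]
  push_cast
  ring

lemma phi_mem (s : ℝ) : phi s ∈ Set.Ico (0:ℝ) (2 * π) := by
  have h2π : (0:ℝ) < 2 * π := by positivity
  have h1 : (⌊s / (2 * π)⌋ : ℝ) ≤ s / (2 * π) := Int.floor_le _
  have h2 : s / (2 * π) < ⌊s / (2 * π)⌋ + 1 := Int.lt_floor_add_one _
  have e : s = (s / (2 * π)) * (2 * π) := by field_simp
  constructor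
  · unfold phi; nlinarith
  · unfold phi; nlinarith

/-- Membership in the `2^n` dilate of `Eset α`. -/
lemma mem_dilate (α : ℝ) (n : ℤ) (x : ℝ) :
    x ∈ (fun s => (2 : ℝ) ^ n * s) '' Eset α ↔
      ((2:ℝ)^(n+1) * (-π + α) ≤ x ∧ x < (2:ℝ)^n * (-π + α)) ∨
      ((2:ℝ)^n * (π + α) ≤ x ∧ x < (2:ℝ)^(n+1) * (π + α)) := by
  have hp : (0:ℝ) < (2:ℝ)^n := by positivity
  have h2 : (2:ℝ)^(n+1) = 2 * (2:ℝ)^n := by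
    rw [zpow_add_one₀ (two_ne_zero)]; ring
  have key : x ∈ (fun s => (2 : ℝ) ^ n * s) '' Eset α ↔ x / (2:ℝ)^n ∈ Eset α := by
    constructor
    · rintro ⟨s, hs, rfl⟩
      simpa [mul_comm, mul_div_assoc, div_self (ne_of_gt hp)] using hs
    · intro h
      exact ⟨x / (2:ℝ)^n, h, by field_simp⟩
  rw [key]
  simp only [Eset, mem_union, mem_Ico, le_div_iff₀ hp, div_lt_iff₀ hp]
  constructor
  · rintro (⟨ha, hb⟩ | ⟨ha, hb⟩)
    · left; constructor <;> nlinarith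
    · right; constructor <;> nlinarith
  · rintro (⟨ha, hb⟩ | ⟨ha, hb⟩)
    · left; constructor <;> nlinarith
    · right; constructor <;> nlinarith

/-- For `−π < α < π`, the set `E_α` is a wavelet set: its dilates `2ⁿE_α` form a partition of
`ℝ∖{0}` modulo null sets, and `E_α` is `2π`-translation congruent to `[0,2π)`. -/
theorem stmt_15 (α : ℝ) (hα₁ : -π < α) (hα₂ : α < π) :
    ((∀ m n : ℤ, m ≠ n →
        AEDisjoint volume ((fun s => (2 : ℝ) ^ m * s) '' Eset α)
          ((fun s => (2 : ℝ) ^ n * s) '' Eset α)) ∧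
      volume (symmDiff ({(0 : ℝ)}ᶜ) (⋃ n : ℤ, (fun s => (2 : ℝ) ^ n * s) '' Eset α)) = 0) ∧
    TranslationCongruent (Eset α) (Set.Ico 0 (2 * π)) := by
  have hπ : (0:ℝ) < π := pi_pos
  have ha : (-π + α) < 0 := by linarith
  have hb : (0:ℝ) < π + α := by linarith
  -- disjointness for m < n
  have hdis : ∀ m n : ℤ, m < n →
      Disjoint ((fun s => (2 : ℝ) ^ m * s) '' Eset α)
        ((fun s => (2 : ℝ) ^ n * s) '' Eset α) := by
    intro m n hmn
    rw [Set.disjoint_left]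
    intro x hm hn
    rw [mem_dilate] at hm hn
    have hle : (2:ℝ)^(m+1) ≤ (2:ℝ)^n := by
      apply zpow_le_zpow_right₀ one_le_two; omega
    have pm : (0:ℝ) < (2:ℝ)^m := by positivity
    have pn : (0:ℝ) < (2:ℝ)^n := by positivity
    have pm1 : (0:ℝ) < (2:ℝ)^(m+1) := by positivity
    rcases hm with ⟨h1, h2⟩ | ⟨h1, h2⟩ <;> rcases hn with ⟨h3, h4⟩ | ⟨h3, h4⟩
    · have : (2:ℝ)^n * (-π + α) ≤ (2:ℝ)^(m+1) * (-π + α) := by nlinarith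
      linarith
    · have : (2:ℝ)^m * (-π + α) < 0 := mul_neg_of_pos_of_neg pm ha
      have : 0 < (2:ℝ)^n * (π + α) := mul_pos pn hb
      linarith
    · have : (2:ℝ)^n * (-π + α) < 0 := mul_neg_of_pos_of_neg pn ha
      have : 0 < (2:ℝ)^m * (π + α) := mul_pos pm hb
      linarith
    · have : (2:ℝ)^(m+1) * (π + α) ≤ (2:ℝ)^n * (π + α) := by nlinarith
      linarith
  have hunion : (⋃ n : ℤ, (fun s => (2 : ℝ) ^ n * s) '' Eset α) = ({(0:ℝ)}ᶜ) := by
    ext x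
    simp only [mem_iUnion, mem_compl_iff, mem_singleton_iff]
    constructor
    · rintro ⟨n, hx⟩
      rw [mem_dilate] at hx
      have pn : (0:ℝ) < (2:ℝ)^n := by positivity
      rcases hx with ⟨h1, h2⟩ | ⟨h1, h2⟩
      · have : (2:ℝ)^n * (-π + α) < 0 := mul_neg_of_pos_of_neg pn ha
        exact ne_of_lt (by linarith)
      · have : 0 < (2:ℝ)^n * (π + α) := mul_pos pn hb
        exact ne_of_gt (by linarith)
    · intro hx
      rcases Ne.lt_or_gt hx with hneg | hpos
      · obtain ⟨n, hn1, hn2⟩ := exists_mem_Ioc_zpow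
          (show 0 < x / (-π + α) from div_pos_of_neg_of_neg hneg ha) one_lt_two
        refine ⟨n, ?_⟩
        rw [mem_dilate]
        left
        constructor
        · exact (div_le_iff_of_neg ha).1 hn2
        · exact (lt_div_iff_of_neg ha).1 hn1
      · obtain ⟨n, hn1, hn2⟩ := exists_mem_Ico_zpow (div_pos hpos hb) one_lt_two
        refine ⟨n, ?_⟩
        rw [mem_dilate]
        right
        exact ⟨(le_div_iff₀ hb).1 hn1, (div_lt_iff₀ hb).1 hn2⟩
  refine ⟨⟨?_, ?_⟩, ?_⟩
  · intro m n hmn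
    rcases lt_trichotomy m n with h | h | h
    · exact (hdis m n h).aedisjoint
    · exact absurd h hmn
    · exact ((hdis n m h).symm).aedisjoint
  · rw [hunion, symmDiff_self]
    simp
  -- translation congruence
  · have h2π : (0:ℝ) < 2 * π := by positivity
    refine ⟨phi, ?_, ⟨?_, ?_, ?_⟩, ?_⟩
    · unfold phi; measurability
    · intro s _; exact phi_mem s
    · -- injectivity
      intro s hs t ht hst
      have es : s = phi s + 2 * π * ⌊s / (2 * π)⌋ := by unfold phi; ring
      have et : t = phi t + 2 * π * ⌊t / (2 * π)⌋ := by unfold phi; ring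
      set j := ⌊s / (2 * π)⌋
      set k := ⌊t / (2 * π)⌋
      have hdiff : s - t = 2 * π * ((j - k : ℤ) : ℝ) := by
        rw [es, et, hst]; push_cast; ring
      -- bound the difference
      have hsE : -(2*π) + 2*α ≤ s ∧ s < 2*π + 2*α := by
        rcases hs with h | h <;> rw [mem_Ico] at h <;> constructor <;> linarith [h.1, h.2]
      have htE : -(2*π) + 2*α ≤ t ∧ t < 2*π + 2*α := by
        rcases ht with h | h <;> rw [mem_Ico] at h <;> constructor <;> linarith [h.1, h.2]
      have hjk : j - k = -1 ∨ j - k = 0 ∨ j - k = 1 := by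
        have h1 : (-(4*π) : ℝ) < 2 * π * ((j - k : ℤ) : ℝ) := by
          rw [← hdiff]; linarith [hsE.1, htE.2]
        have h2 : (2 * π * ((j - k : ℤ) : ℝ)) < 4*π := by
          rw [← hdiff]; linarith [hsE.2, htE.1]
        have b1 : ((-2 : ℤ) : ℝ) < ((j - k : ℤ) : ℝ) := by push_cast; nlinarith
        have b2 : ((j - k : ℤ) : ℝ) < ((2 : ℤ) : ℝ) := by push_cast; nlinarith
        have i1 : (-2 : ℤ) < j - k := by exact_mod_cast b1
        have i2 : (j - k : ℤ) < 2 := by exact_mod_cast b2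
        omega
      rcases hjk with h | h | h
      · -- s = t - 2π : impossible
        exfalso
        have hst2 : t = s + 2 * π := by
          have h' := hdiff; rw [h] at h'; push_cast at h'; linarith
        rcases hs with hsc | hsc <;> rw [mem_Ico] at hsc <;>
            rcases ht with htc | htc <;> rw [mem_Ico] at htc <;>
          · rw [hst2] at htc; linarith [hsc.1, hsc.2, htc.1, htc.2]
      · have h' := hdiff; rw [h] at h'; push_cast at h'; linarith
      · exfalso
        have hst2 : s = t + 2 * π := by
          have h' := hdiff; rw [h] at h'; push_cast at h'; linarith
        rcases ht with htc | htc <;> rw [mem_Ico] at htc <;>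
            rcases hs with hsc | hsc <;> rw [mem_Ico] at hsc <;>
          · rw [hst2] at hsc; linarith [hsc.1, hsc.2, htc.1, htc.2]
    · -- surjectivity
      intro y hy
      rw [mem_Ico] at hy
      obtain ⟨hy0, hy1⟩ := hy
      by_cases h1 : y < 2 * α
      · -- α > 0 and s = y + 2π in I2
        refine ⟨y + 2 * π, Or.inr ?_, ?_⟩
        · rw [mem_Ico]; constructor <;> linarith
        · have : y + 2 * π = y + 2 * π * ((1:ℤ):ℝ) := by push_cast; ring
          rw [this]; exact phi_val y 1 hy0 hy1
      · by_cases h2 : y < π + α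
        · refine ⟨y - 2 * π, Or.inl ?_, ?_⟩
          · rw [mem_Ico]; constructor <;> linarith
          · have : y - 2 * π = y + 2 * π * ((-1:ℤ):ℝ) := by push_cast; ring
            rw [this]; exact phi_val y (-1) hy0 hy1
        · by_cases h3 : y < 2 * π + 2 * α
          · refine ⟨y, Or.inr ?_, ?_⟩
            · rw [mem_Ico]; constructor <;> linarith
            · have : y = y + 2 * π * ((0:ℤ):ℝ) := by push_cast; ring
              nth_rewrite 1 [this]; exact phi_val y 0 hy0 hy1
          · refine ⟨y - 4 * π, Or.inl ?_, ?_⟩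
            · rw [mem_Ico]; constructor <;> linarith
            · have : y - 4 * π = y + 2 * π * ((-2:ℤ):ℝ) := by push_cast; ring
              rw [this]; exact phi_val y (-2) hy0 hy1
    · intro s _
      exact ⟨-⌊s / (2 * π)⌋, by unfold phi; push_cast; ring⟩
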